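/- Let |ψ_hist⟩ = (T+1)^{−1/2} Σ_{t=0}^T |ψ_t⟩ ⊗ |1^t 0^{T−t}⟩, where |ψ_t⟩ = U_t ⋯ U_1 |φ, 0^{n₂}⟩ for unitaries U_1,…,U_T on n qubits, and suppose U_j = I for some j ∈ [T]. Let S = {i, n+j} for a qubit index i ∈ [n], and let ρ = Tr_{\overline{S}}(|ψ_hist⟩⟨ψ_hist|). Define L_± = I ⊗ ⟨±| (acting on the clock qubit) and f_ex(A) = ((T+1)/2)(L_+ A L_+† − L_− A L_−†). Then f_ex(ρ) = Tr_{\overline{i}}(|ψ_j⟩⟨ψ_j|), and moreover ‖f_ex(A)‖₁ ≤ (T+1)‖A‖₁ for every operator A on ℂ² ⊗ ℂ². -/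

import Mathlib

open Matrix BigOperators
open scoped ComplexOrder

/-- The trace norm `‖A‖₁ = Tr √(Aᴴ A)` of a complex matrix. -/
noncomputable def traceNorm {m : Type*} [Fintype m] [DecidableEq m]
    (A : Matrix m m ℂ) : ℝ :=
  (((Matrix.posSemidef_conjTranspose_mul_self A).1.eigenvectorUnitary : Matrix m m ℂ) *
      diagonal (((↑) : ℝ → ℂ) ∘ (√·) ∘ (Matrix.posSemidef_conjTranspose_mul_self A).1.eigenvalues) *
      (star (Matrix.posSemidef_conjTranspose_mul_self A).1.eigenvectorUnitary : Matrix m m ℂ)).trace.re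

/-- `L₊ A L₊†` for `L₊ = I ⊗ ⟨+|` acting on a two-qubit operator. -/
noncomputable def Lplus (A : Matrix (Fin 2 × Fin 2) (Fin 2 × Fin 2) ℂ) :
    Matrix (Fin 2) (Fin 2) ℂ :=
  Matrix.of fun p q => (1/2 : ℂ) * ∑ s : Fin 2, ∑ t : Fin 2, A (p, s) (q, t)

/-- `L₋ A L₋†` for `L₋ = I ⊗ ⟨−|` acting on a two-qubit operator. -/
noncomputable def Lminus (A : Matrix (Fin 2 × Fin 2) (Fin 2 × Fin 2) ℂ) :
    Matrix (Fin 2) (Fin 2) ℂ :=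
  Matrix.of fun p q =>
    (1/2 : ℂ) * ∑ s : Fin 2, ∑ t : Fin 2, (-1 : ℂ) ^ ((s : ℕ) + (t : ℕ)) * A (p, s) (q, t)

/-- The extraction map `f_ex(A) = ((T+1)/2)(L₊ A L₊† − L₋ A L₋†)`. -/
noncomputable def fex (T : ℕ) (A : Matrix (Fin 2 × Fin 2) (Fin 2 × Fin 2) ℂ) :
    Matrix (Fin 2) (Fin 2) ℂ :=
  (((T : ℂ) + 1) / 2) • (Lplus A - Lminus A)

/-- The unary clock string `|t̂⟩ = |1^t 0^{T−t}⟩`. -/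
def clockString (T : ℕ) (t : Fin (T + 1)) : Fin T → Fin 2 :=
  fun k => if (k : ℕ) < (t : ℕ) then 1 else 0

/-- The single-qubit reduced density matrix of a pure state `φ` on qubit `i`. -/
noncomputable def rdm1 {m : ℕ} (φ : (Fin m → Fin 2) → ℂ) (i : Fin m) :
    Matrix (Fin 2) (Fin 2) ℂ :=
  Matrix.of fun p q => ∑ z : Fin m → Fin 2,
    if z i = p then φ z * star (φ (Function.update z i q)) else 0

/-- The reduced density matrix of a pure state on system ⊗ clock registers, keeping
system qubit `i` and clock qubit `j`. -/
noncomputable def rdmSC {n T : ℕ}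
    (φ : ((Fin n → Fin 2) × (Fin T → Fin 2)) → ℂ) (i : Fin n) (j : Fin T) :
    Matrix (Fin 2 × Fin 2) (Fin 2 × Fin 2) ℂ :=
  Matrix.of fun p q => ∑ x : Fin n → Fin 2, ∑ c : Fin T → Fin 2,
    if x i = p.1 ∧ c j = p.2 then
      φ (x, c) * star (φ (Function.update x i q.1, Function.update c j q.2)) else 0

/-!
The history state is supported on clock strings, and changing clock qubit `j` turns one clock
string into another only for the pair `|ĵ⟩ ↔ |(j+1)^⟩`. Hence the clock-off-diagonal entries
of `ρ` are `(T+1)⁻¹ Tr_ī |ψ_j⟩⟨ψ_{j+1}|` and its mirror image, and `f_ex` returns `(T+1)/2`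
times their sum; as the step between `ψ_j` and `ψ_{j+1}` is the identity, this is
`Tr_ī |ψ_{j+1}⟩⟨ψ_{j+1}|`. The norm bound goes through the Frobenius norm:
`‖B‖₁² ≤ 2 ‖B‖_F²` for `2 × 2` matrices, `‖f_ex(A)‖_F² ≤ (T+1)²/2 ‖A‖_F²`, and `‖A‖_F ≤ ‖A‖₁`.
-/

section clock
variable {T : ℕ}

lemma clockString_apply_eq_one_iff {t : Fin (T + 1)} {k : Fin T} :
    clockString T t k = 1 ↔ (k : ℕ) < t := by
  unfold clockString; split_ifs with h <;> simp [h]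

lemma clockString_apply_eq_zero_iff {t : Fin (T + 1)} {k : Fin T} :
    clockString T t k = 0 ↔ (t : ℕ) ≤ k := by
  rw [← not_lt, ← clockString_apply_eq_one_iff]
  unfold clockString; split_ifs <;> simp

lemma clockString_injective : Function.Injective (clockString T) := by
  intro t t' h
  by_contra hne
  rcases Fin.lt_or_lt_of_ne hne with hlt | hlt
  · have := congrFun h ⟨t, by omega⟩
    simp [clockString, hlt] at this
  · have := congrFun h ⟨t', by omega⟩
    simp [clockString, hlt] at this

lemma update_clockString_eq_iff {t t' : Fin (T + 1)} {j : Fin T} {b : Fin 2} :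
    Function.update (clockString T t) j b = clockString T t' ↔
      (b = 1 ↔ (j : ℕ) < t') ∧ ∀ k : ℕ, k < T → k ≠ j → (k < t ↔ k < t') := by
  have fin_two_eq_iff : ∀ a c : Fin 2, a = c ↔ (a = 1 ↔ c = 1) := by decide
  rw [funext_iff, forall_congr' fun k => fin_two_eq_iff _ _]
  simp only [Function.update_apply, clockString_apply_eq_one_iff]
  constructor
  · intro h
    refine ⟨by simpa using h j, fun k hk hkj => ?_⟩
    have hkj' : (⟨k, hk⟩ : Fin T) ≠ j := fun e => hkj (congrArg Fin.val e)
    simpa [hkj', clockString_apply_eq_one_iff] using h ⟨k, hk⟩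
  · rintro ⟨hj, hk⟩ k
    split_ifs with hkj
    · rwa [hkj]
    · rw [clockString_apply_eq_one_iff]
      exact hk k k.isLt (fun e => hkj (Fin.ext e))

lemma clockString_eq_zero_and_update_eq_iff {t t' : Fin (T + 1)} {j : Fin T} :
    clockString T t j = 0 ∧ Function.update (clockString T t) j 1 = clockString T t' ↔
      t = j.castSucc ∧ t' = j.succ := by
  rw [update_clockString_eq_iff, clockString_apply_eq_zero_iff]
  simp only [true_iff, Fin.ext_iff, Fin.val_castSucc, Fin.val_succ]
  constructor
  · rintro ⟨h0, h1, h⟩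
    have h2 := h t; have h3 := h (j + 1)
    omega
  · rintro ⟨h0, h1⟩
    refine ⟨by omega, by omega, fun k _ _ => by omega⟩

lemma clockString_eq_one_and_update_eq_iff {t t' : Fin (T + 1)} {j : Fin T} :
    clockString T t j = 1 ∧ Function.update (clockString T t) j 0 = clockString T t' ↔
      t = j.succ ∧ t' = j.castSucc := by
  rw [update_clockString_eq_iff, clockString_apply_eq_one_iff]
  simp only [Fin.ext_iff, Fin.val_castSucc, Fin.val_succ]
  constructor
  · rintro ⟨h0, h1, h⟩
    have h2 := h t'; have h3 := h (j + 1)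
    omega
  · rintro ⟨h0, h1⟩
    refine ⟨by omega, by omega, fun k _ _ => by omega⟩

end clock

noncomputable def historyState {n T : ℕ} (ψ : Fin (T + 1) → (Fin n → Fin 2) → ℂ) :
    ((Fin n → Fin 2) × (Fin T → Fin 2)) → ℂ := fun xc =>
  (((Real.sqrt (T + 1))⁻¹ : ℝ) : ℂ) *
    ∑ t : Fin (T + 1), (if xc.2 = clockString T t then (1 : ℂ) else 0) * ψ t xc.1

-- `Tr_ī |φ⟩⟨χ|`, so that `rdm1 φ = rdm1Cross φ φ`.
noncomputable def rdm1Cross {m : ℕ} (φ χ : (Fin m → Fin 2) → ℂ) (i : Fin m) :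
    Matrix (Fin 2) (Fin 2) ℂ :=
  Matrix.of fun p q => ∑ z : Fin m → Fin 2,
    if z i = p then φ z * star (χ (Function.update z i q)) else 0

section history
variable {n T : ℕ} (ψ : Fin (T + 1) → (Fin n → Fin 2) → ℂ)

lemma historyState_clockString (x : Fin n → Fin 2) (t : Fin (T + 1)) :
    historyState ψ (x, clockString T t) = (((Real.sqrt (T + 1))⁻¹ : ℝ) : ℂ) * ψ t x := by
  simp [historyState, clockString_injective.eq_iff]

lemma historyState_eq_zero {x : Fin n → Fin 2} {c : Fin T → Fin 2}
    (hc : ∀ t, c ≠ clockString T t) : historyState ψ (x, c) = 0 := by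
  simp [historyState, hc]

lemma historyState_mul_star (x x' : Fin n → Fin 2) (t t' : Fin (T + 1)) :
    historyState ψ (x, clockString T t) * star (historyState ψ (x', clockString T t')) =
      ((T : ℂ) + 1)⁻¹ * (ψ t x * star (ψ t' x')) := by
  have hr : ((((Real.sqrt (T + 1))⁻¹ : ℝ) : ℂ)) ^ 2 = ((T : ℂ) + 1)⁻¹ := by
    rw [← Complex.ofReal_pow, inv_pow, Real.sq_sqrt (by positivity)]
    push_cast; ring
  rw [historyState_clockString, historyState_clockString, star_mul', Complex.star_def,
    Complex.conj_ofReal, ← hr]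
  ring

variable {j : Fin T} {s s' : Fin 2} {ta tb : Fin (T + 1)}

lemma sum_historyState_mul_star_update
    (hpair : ∀ t t', clockString T t j = s ∧
      Function.update (clockString T t) j s' = clockString T t' ↔ t = ta ∧ t' = tb)
    (x x' : Fin n → Fin 2) :
    ∑ c : Fin T → Fin 2,
      (if c j = s then historyState ψ (x, c) * star (historyState ψ (x', Function.update c j s'))
        else 0) = ((T : ℂ) + 1)⁻¹ * (ψ ta x * star (ψ tb x')) := by
  obtain ⟨hs, hupd⟩ := (hpair ta tb).2 ⟨rfl, rfl⟩
  rw [Finset.sum_eq_single (clockString T ta), if_pos hs, hupd, historyState_mul_star]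
  · intro c _ hne
    split_ifs with hcj
    · by_cases hclk : ∃ t, c = clockString T t
      · obtain ⟨t, rfl⟩ := hclk
        have hnot : ∀ t', Function.update (clockString T t) j s' ≠ clockString T t' :=
          fun t' h => hne (by rw [((hpair t t').1 ⟨hcj, h⟩).1])
        rw [historyState_eq_zero ψ hnot, star_zero, mul_zero]
      · rw [historyState_eq_zero ψ (not_exists.mp hclk), zero_mul]
    · rfl
  · simp

lemma rdmSC_historyState_apply
    (hpair : ∀ t t', clockString T t j = s ∧
      Function.update (clockString T t) j s' = clockString T t' ↔ t = ta ∧ t' = tb)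
    (i : Fin n) (p q : Fin 2) :
    rdmSC (historyState ψ) i j (p, s) (q, s') =
      ((T : ℂ) + 1)⁻¹ * rdm1Cross (ψ ta) (ψ tb) i p q := by
  simp only [rdmSC, rdm1Cross, Matrix.of_apply, Finset.mul_sum]
  refine Finset.sum_congr rfl fun x _ => ?_
  split_ifs with hx
  · rw [← sum_historyState_mul_star_update ψ hpair]
    simp only [hx, true_and]
  · simp [hx]

end history

section traceNorm
variable {m : Type*} [Fintype m] [DecidableEq m]

noncomputable def singularValues (A : Matrix m m ℂ) : m → ℝ :=
  fun i => √((posSemidef_conjTranspose_mul_self A).1.eigenvalues i)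

lemma singularValues_nonneg (A : Matrix m m ℂ) (i : m) : 0 ≤ singularValues A i :=
  Real.sqrt_nonneg _

lemma traceNorm_eq_sum_singularValues (A : Matrix m m ℂ) :
    traceNorm A = ∑ i, singularValues A i := by
  have hU := (posSemidef_conjTranspose_mul_self A).1.eigenvectorUnitary.2
  rw [traceNorm, trace_mul_cycle, (mem_unitaryGroup_iff').mp hU, one_mul, trace_diagonal]
  simp [singularValues]

lemma traceNorm_nonneg (A : Matrix m m ℂ) : 0 ≤ traceNorm A := by
  rw [traceNorm_eq_sum_singularValues]
  exact Finset.sum_nonneg fun i _ => singularValues_nonneg A i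

lemma sum_sq_singularValues (A : Matrix m m ℂ) :
    ∑ i, singularValues A i ^ 2 = ∑ i, ∑ j, ‖A i j‖ ^ 2 := by
  have hPSD := posSemidef_conjTranspose_mul_self A
  have htrace : (Aᴴ * A).trace = ((∑ i, ∑ j, ‖A i j‖ ^ 2 : ℝ) : ℂ) := by
    simp only [trace, diag_apply, mul_apply, conjTranspose_apply, Complex.ofReal_sum]
    rw [Finset.sum_comm]
    refine Finset.sum_congr rfl fun i _ => Finset.sum_congr rfl fun j _ => ?_
    rw [Complex.star_def, ← Complex.normSq_eq_conj_mul_self, Complex.normSq_eq_norm_sq]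
  rw [hPSD.1.trace_eq_sum_eigenvalues] at htrace
  simp only [singularValues, Real.sq_sqrt (hPSD.eigenvalues_nonneg _)]
  exact Complex.ofReal_injective (by simpa using htrace)

lemma sum_norm_sq_le_traceNorm_sq (A : Matrix m m ℂ) :
    ∑ i, ∑ j, ‖A i j‖ ^ 2 ≤ traceNorm A ^ 2 := by
  rw [← sum_sq_singularValues, traceNorm_eq_sum_singularValues]
  exact Finset.sum_sq_le_sq_sum_of_nonneg fun i _ => singularValues_nonneg A i

lemma traceNorm_sq_le_card_mul_sum_norm_sq (A : Matrix m m ℂ) :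
    traceNorm A ^ 2 ≤ Fintype.card m * ∑ i, ∑ j, ‖A i j‖ ^ 2 := by
  rw [← sum_sq_singularValues, traceNorm_eq_sum_singularValues]
  exact sq_sum_le_card_mul_sum_sq

end traceNorm

lemma fex_apply (T : ℕ) (A : Matrix (Fin 2 × Fin 2) (Fin 2 × Fin 2) ℂ) (p q : Fin 2) :
    fex T A p q = ((T : ℂ) + 1) / 2 * (A (p, 0) (q, 1) + A (p, 1) (q, 0)) := by
  simp only [fex, Matrix.smul_apply, Matrix.sub_apply, Lplus, Lminus, of_apply,
    Fin.sum_univ_two, smul_eq_mul, Fin.val_zero, Fin.val_one]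
  ring

lemma sum_norm_sq_fex_le (T : ℕ) (A : Matrix (Fin 2 × Fin 2) (Fin 2 × Fin 2) ℂ) :
    ∑ p, ∑ q, ‖fex T A p q‖ ^ 2 ≤ ((T : ℝ) + 1) ^ 2 / 2 * ∑ i, ∑ j, ‖A i j‖ ^ 2 := by
  have hc : ‖((T : ℂ) + 1) / 2‖ = ((T : ℝ) + 1) / 2 := by
    rw [norm_div, Complex.norm_two, ← Nat.cast_add_one, Complex.norm_natCast]
    push_cast; rfl
  have hentry : ∀ p q, ‖fex T A p q‖ ^ 2 ≤
      ((T : ℝ) + 1) ^ 2 / 2 * (‖A (p, 0) (q, 1)‖ ^ 2 + ‖A (p, 1) (q, 0)‖ ^ 2) := by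
    intro p q
    have hsum := pow_le_pow_left₀ (norm_nonneg _)
      (norm_add_le (A (p, 0) (q, 1)) (A (p, 1) (q, 0))) 2
    rw [fex_apply, norm_mul, mul_pow, hc]
    nlinarith [add_sq_le (a := ‖A (p, 0) (q, 1)‖) (b := ‖A (p, 1) (q, 0)‖)]
  calc ∑ p, ∑ q, ‖fex T A p q‖ ^ 2
      ≤ ∑ p, ∑ q,
          ((T : ℝ) + 1) ^ 2 / 2 * (‖A (p, 0) (q, 1)‖ ^ 2 + ‖A (p, 1) (q, 0)‖ ^ 2) := by
        gcongr with p _ q _; exact hentry p q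
    _ ≤ ((T : ℝ) + 1) ^ 2 / 2 * ∑ i, ∑ j, ‖A i j‖ ^ 2 := by
        simp only [← Finset.mul_sum]
        gcongr
        simp only [Fintype.sum_prod_type, Fin.sum_univ_two]
        rw [← sub_nonneg]; ring_nf; positivity

lemma traceNorm_fex_le (T : ℕ) (A : Matrix (Fin 2 × Fin 2) (Fin 2 × Fin 2) ℂ) :
    traceNorm (fex T A) ≤ ((T : ℝ) + 1) * traceNorm A := by
  have hA := traceNorm_nonneg A
  refine le_of_pow_le_pow_left₀ two_ne_zero (by positivity) ?_
  calc traceNorm (fex T A) ^ 2 ≤ 2 * ∑ p, ∑ q, ‖fex T A p q‖ ^ 2 := by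
        simpa using traceNorm_sq_le_card_mul_sum_norm_sq (fex T A)
    _ ≤ 2 * (((T : ℝ) + 1) ^ 2 / 2 * ∑ i, ∑ j, ‖A i j‖ ^ 2) := by
        gcongr; exact sum_norm_sq_fex_le T A
    _ ≤ ((T : ℝ) + 1) ^ 2 * traceNorm A ^ 2 := by
        have := sum_norm_sq_le_traceNorm_sq A
        nlinarith
    _ = (((T : ℝ) + 1) * traceNorm A) ^ 2 := by ring

/-- Steps are indexed from `0`: `U j` is the paper's `U_{j+1}`, taking `ψ j.castSucc` to
`ψ j.succ`. -/
theorem extraction_lemma_general (n₁ n₂ T : ℕ)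
    (U : Fin T → Matrix (Fin (n₁ + n₂) → Fin 2) (Fin (n₁ + n₂) → Fin 2) ℂ)
    (ψ : Fin (T + 1) → ((Fin (n₁ + n₂) → Fin 2) → ℂ))
    (hrec : ∀ t : Fin T, ψ t.succ = (U t).mulVec (ψ t.castSucc))
    (j : Fin T) (hId : U j = 1) (i : Fin (n₁ + n₂))
    (ψhist : ((Fin (n₁ + n₂) → Fin 2) × (Fin T → Fin 2)) → ℂ)
    (hhist : ψhist = fun xc =>
      (((Real.sqrt (T + 1))⁻¹ : ℝ) : ℂ) *
        ∑ t : Fin (T + 1), (if xc.2 = clockString T t then (1 : ℂ) else 0) * ψ t xc.1) :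
    fex T (rdmSC ψhist i j) = rdm1 (ψ j.succ) i ∧
    (∀ A : Matrix (Fin 2 × Fin 2) (Fin 2 × Fin 2) ℂ,
        traceNorm (fex T A) ≤ ((T : ℝ) + 1) * traceNorm A) := by
  refine ⟨?_, traceNorm_fex_le T⟩
  have hψ : ψ j.castSucc = ψ j.succ := by rw [hrec j, hId, one_mulVec]
  have hhist' : ψhist = historyState ψ := hhist
  ext p q
  rw [fex_apply, hhist',
    rdmSC_historyState_apply ψ fun _ _ => clockString_eq_zero_and_update_eq_iff,
    rdmSC_historyState_apply ψ fun _ _ => clockString_eq_one_and_update_eq_iff, hψ]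
  change _ = rdm1Cross (ψ j.succ) (ψ j.succ) i p q
  field_simp
  ring

/-- **Extraction Lemma.** Let `|ψ_hist⟩ = (T+1)^{-1/2} Σ_t |ψ_t⟩|1^t0^{T−t}⟩`
with `|ψ_t⟩ = U_t ⋯ U_1 |φ, 0^{n₂}⟩`, and suppose the step `U_j = I` (for the clock qubit
with 0-based index `j`, i.e. time step `j+1`). Then `f_ex` applied to the two-qubit reduced
density matrix on system qubit `i` and clock qubit `j` recovers `Tr_{ī}(|ψ_{j+1}⟩⟨ψ_{j+1}|)`,
and `‖f_ex(A)‖₁ ≤ (T+1)‖A‖₁` for every two-qubit operator `A`. -/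
theorem extraction_lemma (n₁ n₂ T : ℕ)
    (U : Fin T → Matrix (Fin (n₁ + n₂) → Fin 2) (Fin (n₁ + n₂) → Fin 2) ℂ)
    (hU : ∀ t, U t * (U t)ᴴ = 1 ∧ (U t)ᴴ * U t = 1)
    (φ0 : (Fin n₁ → Fin 2) → ℂ) (hφ0 : ∑ z : Fin n₁ → Fin 2, ‖φ0 z‖ ^ 2 = 1)
    (ψ : Fin (T + 1) → ((Fin (n₁ + n₂) → Fin 2) → ℂ))
    (hinit : ψ 0 = fun x =>
      if ∀ k : Fin n₂, x (Fin.natAdd n₁ k) = 0 then φ0 (fun i => x (Fin.castAdd n₂ i)) else 0)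
    (hrec : ∀ t : Fin T, ψ t.succ = (U t).mulVec (ψ t.castSucc))
    (j : Fin T) (hId : U j = 1) (i : Fin (n₁ + n₂))
    (ψhist : ((Fin (n₁ + n₂) → Fin 2) × (Fin T → Fin 2)) → ℂ)
    (hhist : ψhist = fun xc =>
      (((Real.sqrt (T + 1))⁻¹ : ℝ) : ℂ) *
        ∑ t : Fin (T + 1), (if xc.2 = clockString T t then (1 : ℂ) else 0) * ψ t xc.1) :
    fex T (rdmSC ψhist i j) = rdm1 (ψ j.succ) i ∧
    (∀ A : Matrix (Fin 2 × Fin 2) (Fin 2 × Fin 2) ℂ,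
        traceNorm (fex T A) ≤ ((T : ℝ) + 1) * traceNorm A) :=
  extraction_lemma_general n₁ n₂ T U ψ hrec j hId i ψhist hhist
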